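/- Let Q be a prime quiver with χ(Q) ≥ 2 such that the pair (Q,0) (with the zero weight) is tight. Then for every vertex v ∈ Q0 there are at least two arrows a with a⁻ = v and at least two arrows a with a⁺ = v. -/
import Mathlib


/-- The flow map of a quiver with arrow set `A`, vertex set `V`, source map `s`
and target map `t`. -/
def flowMap {V A : Type} [Fintype A] [DecidableEq V] (s t : A → V) (x : A → ℝ) (v : V) : ℝ :=
  (∑ a : A, if t a = v then x a else 0) - (∑ a : A, if s a = v then x a else 0)

/-- The quiver polyhedron `∇(Q,θ)`. -/
def quiverPolyhedron {V A : Type} [Fintype A] [DecidableEq V] (s t : A → V) (θ : V → ℤ) :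
    Set (A → ℝ) :=
  {x | (∀ a, 0 ≤ x a) ∧ ∀ v, flowMap s t x v = (θ v : ℝ)}

/-- A point of `ℝ^A` is a lattice point if all its coordinates are integers. -/
def IsLatticePt {A : Type} (x : A → ℝ) : Prop := ∀ a, ∃ z : ℤ, x a = (z : ℝ)

/-- Integral-affine equivalence of lattice polyhedra. -/
def IntegralAffinelyEquivalent {A B : Type}
    (P : Set (A → ℝ)) (Q : Set (B → ℝ)) : Prop :=
  ∃ (φ : (A → ℝ) →ᵃ[ℝ] (B → ℝ)) (ψ : (B → ℝ) →ᵃ[ℝ] (A → ℝ)),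
    (∀ x ∈ affineSpan ℝ P, ψ (φ x) = x) ∧
    (∀ y ∈ affineSpan ℝ Q, φ (ψ y) = y) ∧
    φ '' (affineSpan ℝ P : Set (A → ℝ)) = (affineSpan ℝ Q : Set (B → ℝ)) ∧
    φ '' ((affineSpan ℝ P : Set (A → ℝ)) ∩ {x | IsLatticePt x}) =
      (affineSpan ℝ Q : Set (B → ℝ)) ∩ {y | IsLatticePt y} ∧
    φ '' P = Q

/-- The quiver has an oriented cycle. -/
def HasOrientedCycle {V A : Type} (s t : A → V) : Prop :=
  ∃ (n : ℕ) (f : Fin (n + 1) → A), ∀ i : Fin (n + 1), t (f i) = s (f (i + 1))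

/-- The arrow `a` is removable for `(Q,θ)`. -/
def Removable {V A : Type} [Fintype A] [DecidableEq V] [DecidableEq A]
    (s t : A → V) (θ : V → ℤ) (a : A) : Prop :=
  IntegralAffinelyEquivalent (quiverPolyhedron s t θ)
    (quiverPolyhedron (fun b : {b : A // b ≠ a} => s b.1) (fun b => t b.1) θ)

/-- The non-loop arrow `a` is contractable for `(Q,θ)`. -/
def Contractable {V A : Type} [Fintype A] [DecidableEq V] [DecidableEq A]
    (s t : A → V) (θ : V → ℤ) (a : A) (h : s a ≠ t a) : Prop :=
  IntegralAffinelyEquivalent (quiverPolyhedron s t θ)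
    (quiverPolyhedron
      (fun b : {b : A // b ≠ a} =>
        if hb : s b.1 = s a then (⟨t a, Ne.symm h⟩ : {v : V // v ≠ s a}) else ⟨s b.1, hb⟩)
      (fun b : {b : A // b ≠ a} =>
        if hb : t b.1 = s a then (⟨t a, Ne.symm h⟩ : {v : V // v ≠ s a}) else ⟨t b.1, hb⟩)
      (fun v : {v : V // v ≠ s a} => if v.1 = t a then θ (s a) + θ (t a) else θ v.1))

/-- The pair `(Q,θ)` is tight. -/
def Tight {V A : Type} [Fintype A] [DecidableEq V] [DecidableEq A]
    (s t : A → V) (θ : V → ℤ) : Prop :=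
  (quiverPolyhedron s t θ).Nonempty ∧
  (∀ a : A, ¬ Removable s t θ a) ∧
  ∀ (a : A) (h : s a ≠ t a), ¬ Contractable s t θ a h

/-- The simple graph underlying an undirected multigraph with edge-end map `ends`. -/
def mgraphAdj {V E : Type} (ends : E → Sym2 V) : SimpleGraph V :=
  SimpleGraph.fromRel (fun v w => ∃ e : E, ends e = s(v, w))

/-- All endpoints of the edge `e` lie in `S`. -/
def EdgeWithin {V E : Type} (ends : E → Sym2 V) (S : Set V) (e : E) : Prop :=
  ∀ x ∈ ends e, x ∈ S

/-- A connected undirected multigraph with at least one edge is prime if it is not the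
union of two full proper subgraphs having exactly one common vertex. -/
def MultigraphPrime {V E : Type} (ends : E → Sym2 V) : Prop :=
  (mgraphAdj ends).Connected ∧ Nonempty E ∧
    ¬ ∃ S T : Set V, S ∪ T = Set.univ ∧ S ≠ Set.univ ∧ T ≠ Set.univ ∧
      (∃ v : V, S ∩ T = {v}) ∧ ∀ e : E, EdgeWithin ends S e ∨ EdgeWithin ends T e

/-- The underlying undirected multigraph of a quiver. -/
def quiverEnds {V A : Type} (s t : A → V) (a : A) : Sym2 V := s(s a, t a)

/-- A quiver is prime if its underlying graph is prime. -/
def QuiverPrime {V A : Type} (s t : A → V) : Prop := MultigraphPrime (quiverEnds s t)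

lemma sum_split {A : Type} [Fintype A] [DecidableEq A] (a : A) (f : A → ℝ) :
    ∑ b : A, f b = f a + ∑ b : {b : A // b ≠ a}, f b.1 := by
  rw [← Finset.add_sum_erase Finset.univ f (Finset.mem_univ a)]
  congr 1
  exact Finset.sum_subtype _ (by simp) f

def linSum {ι : Type} [Fintype ι] (p : ι → Prop) [DecidablePred p] : (ι → ℝ) →ₗ[ℝ] ℝ where
  toFun x := ∑ i, if p i then x i else 0
  map_add' x y := by
    rw [← Finset.sum_add_distrib]
    exact Finset.sum_congr rfl fun i _ => by split <;> simp
  map_smul' r x := by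
    simp only [RingHom.id_apply, smul_eq_mul, Finset.mul_sum]
    exact Finset.sum_congr rfl fun i _ => by split <;> simp

lemma linSum_apply {ι : Type} [Fintype ι] (p : ι → Prop) [DecidablePred p] (x : ι → ℝ) :
    linSum p x = ∑ i, if p i then x i else 0 := rfl

lemma linSum_lattice {ι : Type} [Fintype ι] (p : ι → Prop) [DecidablePred p] (x : ι → ℝ)
    (hx : IsLatticePt x) : ∃ z : ℤ, linSum p x = (z : ℝ) := by
  choose g hg using hx
  refine ⟨∑ i, if p i then g i else 0, ?_⟩
  rw [linSum_apply, Int.cast_sum]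
  exact Finset.sum_congr rfl fun i _ => by split <;> simp [hg]

lemma equiv_of_pair {A B : Type} (P : Set (A → ℝ)) (Q : Set (B → ℝ))
    (φ : (A → ℝ) →ᵃ[ℝ] (B → ℝ)) (ψ : (B → ℝ) →ᵃ[ℝ] (A → ℝ))
    (hψφ : ∀ x ∈ affineSpan ℝ P, ψ (φ x) = x)
    (himg : φ '' P = Q)
    (hφlat : ∀ x, IsLatticePt x → IsLatticePt (φ x))
    (hψlat : ∀ y, IsLatticePt y → IsLatticePt (ψ y)) :
    IntegralAffinelyEquivalent P Q := by
  have hspan : φ '' (affineSpan ℝ P : Set (A → ℝ)) = (affineSpan ℝ Q : Set (B → ℝ)) := by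
    rw [← AffineSubspace.coe_map, AffineSubspace.map_span, himg]
  have hφψ : ∀ y ∈ affineSpan ℝ Q, φ (ψ y) = y := by
    intro y hy
    have hy' : y ∈ (affineSpan ℝ Q : Set (B → ℝ)) := hy
    rw [← hspan] at hy'
    obtain ⟨x, hx, rfl⟩ := hy'
    rw [hψφ x hx]
  refine ⟨φ, ψ, hψφ, hφψ, hspan, ?_, himg⟩
  ext y
  constructor
  · rintro ⟨x, ⟨hx1, hx2⟩, rfl⟩
    exact ⟨hspan ▸ Set.mem_image_of_mem φ hx1, hφlat x hx2⟩
  · rintro ⟨hy1, hy2⟩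
    have hy1' := hy1
    rw [← hspan] at hy1'
    obtain ⟨x, hx, rfl⟩ := hy1'
    have hxy : x = ψ (φ x) := (hψφ x hx).symm
    refine ⟨x, ⟨hx, ?_⟩, rfl⟩
    rw [hxy]; exact hψlat _ hy2

section QuiverHelpers

variable {V A : Type} [Fintype A] [DecidableEq V] [DecidableEq A]

def extMap (a : A) (c : ({b : A // b ≠ a} → ℝ) →ₗ[ℝ] ℝ) :
    ({b : A // b ≠ a} → ℝ) →ₗ[ℝ] (A → ℝ) where
  toFun y b := if h : b = a then c y else y ⟨b, h⟩
  map_add' y z := by funext b; by_cases h : b = a <;> simp [h]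
  map_smul' r y := by funext b; by_cases h : b = a <;> simp [h]

lemma extMap_self (a : A) (c : ({b : A // b ≠ a} → ℝ) →ₗ[ℝ] ℝ) (y) :
    extMap a c y a = c y := by simp [extMap]

lemma extMap_ne (a : A) (c : ({b : A // b ≠ a} → ℝ) →ₗ[ℝ] ℝ) (y) (b : {b : A // b ≠ a}) :
    extMap a c y b.1 = y b := by simp [extMap, b.2]

lemma extMap_lattice (a : A) (p : {b : A // b ≠ a} → Prop) [DecidablePred p] (y)
    (hy : IsLatticePt y) : IsLatticePt (extMap a (linSum p) y) := by
  intro b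
  by_cases h : b = a
  · subst h; rw [extMap_self]; exact linSum_lattice p y hy
  · rw [show b = (⟨b, h⟩ : {b : A // b ≠ a}).1 from rfl, extMap_ne]; exact hy _

lemma flow_ext (s t : A → V) (a : A) (y : {b : A // b ≠ a} → ℝ) (x : A → ℝ)
    (hx : ∀ b : {b : A // b ≠ a}, x b.1 = y b) (u : V) :
    flowMap s t x u =
      flowMap (fun b : {b : A // b ≠ a} => s b.1) (fun b => t b.1) y u
        + (if t a = u then x a else 0) - (if s a = u then x a else 0) := by
  unfold flowMap
  rw [sum_split a (fun b => if t b = u then x b else 0),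
      sum_split a (fun b => if s b = u then x b else 0)]
  simp only [hx]
  ring

lemma removable_of_vanishing (s t : A → V) (a : A)
    (hvan : ∀ x ∈ quiverPolyhedron s t (fun _ => (0:ℤ)), x a = 0) :
    Removable s t (fun _ => (0:ℤ)) a := by
  classical
  set P := quiverPolyhedron s t (fun _ => (0:ℤ)) with hP
  set φ : (A → ℝ) →ᵃ[ℝ] ({b : A // b ≠ a} → ℝ) :=
    (LinearMap.funLeft ℝ ℝ (Subtype.val : {b : A // b ≠ a} → A)).toAffineMap with hφ
  set ψ : ({b : A // b ≠ a} → ℝ) →ᵃ[ℝ] (A → ℝ) :=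
    (extMap a (linSum (fun _ => False))).toAffineMap with hψ
  have hφ_apply : ∀ x (b : {b : A // b ≠ a}), φ x b = x b.1 := fun _ _ => rfl
  have hψc : ∀ y, linSum (fun _ : {b : A // b ≠ a} => False) y = 0 := by
    intro y; rw [linSum_apply]; simp
  refine equiv_of_pair _ _ φ ψ ?_ ?_ ?_ ?_
  · -- ψ ∘ φ = id on span
    intro x hx
    have hx' : x ∈ Submodule.span ℝ P := by
      have := affineSpan_le_toAffineSubspace_span (k := ℝ) (s := P) hx
      simpa [Submodule.mem_toAffineSubspace] using this
    have hker : Submodule.span ℝ P ≤ LinearMap.ker (LinearMap.proj a (R := ℝ) (φ := fun _ : A => ℝ)) := by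
      rw [Submodule.span_le]
      intro z hz
      simpa using hvan z hz
    have hxa : x a = 0 := hker hx'
    funext b
    by_cases hb : b = a
    · rw [hb]
      show extMap a _ _ a = x a
      rw [extMap_self, hψc, hxa]
    · show extMap a _ _ b = x b
      rw [show b = (⟨b, hb⟩ : {b : A // b ≠ a}).1 from rfl, extMap_ne]
      rfl
  · -- image
    ext y
    constructor
    · rintro ⟨x, hxP, rfl⟩
      have hxa := hvan x hxP
      constructor
      · intro b; exact hxP.1 b.1
      · intro u
        have := flow_ext s t a (fun b => x b.1) x (fun _ => rfl) u
        rw [hxP.2 u] at this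
        rw [hxa] at this
        simp only [ite_self] at this
        have h2x : flowMap (fun b : {b : A // b ≠ a} => s b.1) (fun b => t b.1) (fun b => x b.1) u = 0 := by
          push_cast at this ⊢
          linarith
        show flowMap _ _ (φ x) u = ((0:ℤ):ℝ)
        rw [Int.cast_zero]
        exact h2x
    · rintro ⟨hy0, hyflow⟩
      refine ⟨ψ y, ⟨?_, ?_⟩, ?_⟩
      · intro b
        by_cases hb : b = a
        · rw [hb]; show (0:ℝ) ≤ extMap a _ _ a; rw [extMap_self, hψc]
        · show (0:ℝ) ≤ extMap _ _ _ _
          rw [show b = (⟨b, hb⟩ : {b : A // b ≠ a}).1 from rfl, extMap_ne]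
          exact hy0 _
      · intro u
        have hxa : (ψ y : A → ℝ) a = 0 := by show extMap _ _ _ _ = 0; rw [extMap_self, hψc]
        have := flow_ext s t a y (ψ y) (fun b => extMap_ne a _ y b) u
        rw [hxa, hyflow u] at this
        simpa using this
      · funext b
        exact extMap_ne a _ y b
  · intro x hx b; exact hx b.1
  · intro y hy
    exact extMap_lattice a (fun _ => False) y hy

end QuiverHelpers

section Contract

variable {V A : Type} [Fintype A] [DecidableEq V] [DecidableEq A]

lemma flowDel_eq (s t : A → V) (a : A) (y : {b : A // b ≠ a} → ℝ) (w : V) :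
    flowMap (fun b : {b : A // b ≠ a} => s b.1) (fun b => t b.1) y w
      = linSum (fun b : {b : A // b ≠ a} => t b.1 = w) y
        - linSum (fun b : {b : A // b ≠ a} => s b.1 = w) y := rfl

lemma flow_contract (s t : A → V) (a : A) (h : s a ≠ t a) (y : {b : A // b ≠ a} → ℝ)
    (u : {v : V // v ≠ s a}) :
    flowMap
      (fun b : {b : A // b ≠ a} =>
        if hb : s b.1 = s a then (⟨t a, Ne.symm h⟩ : {v : V // v ≠ s a}) else ⟨s b.1, hb⟩)
      (fun b : {b : A // b ≠ a} =>
        if hb : t b.1 = s a then (⟨t a, Ne.symm h⟩ : {v : V // v ≠ s a}) else ⟨t b.1, hb⟩)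
      y u
    = if u.1 = t a
      then flowMap (fun b : {b : A // b ≠ a} => s b.1) (fun b => t b.1) y (s a)
           + flowMap (fun b : {b : A // b ≠ a} => s b.1) (fun b => t b.1) y (t a)
      else flowMap (fun b : {b : A // b ≠ a} => s b.1) (fun b => t b.1) y u.1 := by
  by_cases hu : u.1 = t a
  · rw [if_pos hu]
    unfold flowMap
    have hL : ∀ (f : A → V),
        (∑ b : {b : A // b ≠ a},
          if (if hb : f b.1 = s a then (⟨t a, Ne.symm h⟩ : {v : V // v ≠ s a})
              else ⟨f b.1, hb⟩) = u then y b else 0)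
        = (∑ b : {b : A // b ≠ a}, if f b.1 = s a then y b else 0)
          + (∑ b : {b : A // b ≠ a}, if f b.1 = t a then y b else 0) := by
      intro f
      rw [← Finset.sum_add_distrib]
      apply Finset.sum_congr rfl
      intro b _
      by_cases hb : f b.1 = s a
      · rw [dif_pos hb, if_pos (Subtype.ext hu.symm), if_pos hb, if_neg (by rw [hb]; exact h)]
        ring
      · rw [dif_neg hb, if_neg hb]
        by_cases hb2 : f b.1 = t a
        · rw [if_pos (Subtype.ext (show f b.1 = u.1 from hb2.trans hu.symm)), if_pos hb2]; ring
        · rw [if_neg (fun he => hb2 ((Subtype.ext_iff.mp he).trans hu)), if_neg hb2]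
          ring
    rw [hL s, hL t]; ring
  · rw [if_neg hu]
    unfold flowMap
    have hL : ∀ (f : A → V),
        (∑ b : {b : A // b ≠ a},
          if (if hb : f b.1 = s a then (⟨t a, Ne.symm h⟩ : {v : V // v ≠ s a})
              else ⟨f b.1, hb⟩) = u then y b else 0)
        = (∑ b : {b : A // b ≠ a}, if f b.1 = u.1 then y b else 0) := by
      intro f
      apply Finset.sum_congr rfl
      intro b _
      by_cases hb : f b.1 = s a
      · rw [dif_pos hb, if_neg (fun he => hu (Subtype.ext_iff.mp he).symm),
            if_neg (by rw [hb]; exact fun he => u.2 he.symm)]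
      · rw [dif_neg hb]
        by_cases hb2 : f b.1 = u.1
        · rw [if_pos (Subtype.ext hb2), if_pos hb2]
        · rw [if_neg (fun he => hb2 (Subtype.ext_iff.mp he)), if_neg hb2]
    rw [hL s, hL t]

end Contract

section Contract2

variable {V A : Type} [Fintype A] [DecidableEq V] [DecidableEq A]

lemma linSum_restrict (a : A) (q : {b : A // b ≠ a} → Prop) [DecidablePred q] (x : A → ℝ) :
    linSum (fun b : A => ∃ hb : b ≠ a, q ⟨b, hb⟩) x
      = linSum q (fun b : {b : A // b ≠ a} => x b.1) := by
  rw [linSum_apply, linSum_apply, sum_split a]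
  have h0 : (if ∃ hb : a ≠ a, q ⟨a, hb⟩ then x a else 0) = 0 := by
    rw [if_neg]; rintro ⟨hb, -⟩; exact hb rfl
  rw [h0, zero_add]
  apply Finset.sum_congr rfl
  intro b _
  by_cases hq : q b
  · rw [if_pos ⟨b.2, hq⟩, if_pos hq]
  · rw [if_neg (by rintro ⟨hb2, h2⟩; exact hq h2), if_neg hq]

lemma linSum_nonneg {ι : Type} [Fintype ι] (p : ι → Prop) [DecidablePred p] (y : ι → ℝ)
    (hy : ∀ i, 0 ≤ y i) : 0 ≤ linSum p y := by
  rw [linSum_apply]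
  exact Finset.sum_nonneg fun i _ => by split; exacts [hy i, le_rfl]

lemma linSum_zero_of {ι : Type} [Fintype ι] (p : ι → Prop) [DecidablePred p] (y : ι → ℝ)
    (hp : ∀ i, ¬ p i) : linSum p y = 0 := by
  rw [linSum_apply]
  exact Finset.sum_eq_zero fun i _ => if_neg (hp i)

lemma contractable_out (s t : A → V) (a : A) (h : s a ≠ t a)
    (huniq : ∀ b, s b = s a → b = a) :
    Contractable s t (fun _ => (0:ℤ)) a h := by
  classical
  set p : {b : A // b ≠ a} → Prop := fun b => t b.1 = s a with hp
  set φ : (A → ℝ) →ᵃ[ℝ] ({b : A // b ≠ a} → ℝ) :=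
    (LinearMap.funLeft ℝ ℝ (Subtype.val : {b : A // b ≠ a} → A)).toAffineMap with hφdef
  set ψ := (extMap a (linSum p)).toAffineMap with hψdef
  have hφx : ∀ (x : A → ℝ) (b : {b : A // b ≠ a}), φ x b = x b.1 := fun _ _ => rfl
  -- flowDel values of a restricted point of P
  have hE : ∀ x ∈ quiverPolyhedron s t (fun _ => (0:ℤ)), ∀ w,
      flowMap (fun b : {b : A // b ≠ a} => s b.1) (fun b => t b.1) (φ x) w
        = (if s a = w then x a else 0) - (if t a = w then x a else 0) := by
    intro x hx w
    have h1 := flow_ext s t a (φ x) x (fun _ => rfl) w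
    have h2 := hx.2 w
    rw [h2] at h1
    push_cast at h1
    linarith
  -- key identity: for x in P, x a equals the sub sum of incoming at s a
  have hkey : ∀ x ∈ quiverPolyhedron s t (fun _ => (0:ℤ)), x a = linSum p (φ x) := by
    intro x hx
    have hE1 := hE x hx (s a)
    rw [if_pos rfl, if_neg (fun e => h e.symm), flowDel_eq] at hE1
    have hz : linSum (fun b : {b : A // b ≠ a} => s b.1 = s a) (φ x) = 0 :=
      linSum_zero_of _ _ (fun b hb => b.2 (huniq b.1 hb))
    rw [hz] at hE1
    linarith
  refine equiv_of_pair _ _ φ ψ ?_ ?_ ?_ ?_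
  · -- ψ ∘ φ = id on span
    intro x hx
    have hx' : x ∈ Submodule.span ℝ (quiverPolyhedron s t (fun _ => (0:ℤ))) := by
      have := affineSpan_le_toAffineSubspace_span
        (k := ℝ) (s := quiverPolyhedron s t (fun _ => (0:ℤ))) hx
      simpa [Submodule.mem_toAffineSubspace] using this
    set f : (A → ℝ) →ₗ[ℝ] ℝ :=
      LinearMap.proj a - (linSum p).comp (LinearMap.funLeft ℝ ℝ Subtype.val) with hfdef
    have hker : Submodule.span ℝ (quiverPolyhedron s t (fun _ => (0:ℤ)))
        ≤ LinearMap.ker f := by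
      rw [Submodule.span_le]
      intro z hz
      have := hkey z hz
      simp only [SetLike.mem_coe, LinearMap.mem_ker, hfdef, LinearMap.sub_apply,
        LinearMap.proj_apply, LinearMap.coe_comp, Function.comp_apply]
      rw [sub_eq_zero]
      exact this
    have hxa : x a = linSum p (φ x) := by
      have := hker hx'
      simp only [LinearMap.mem_ker, hfdef, LinearMap.sub_apply, LinearMap.proj_apply,
        LinearMap.coe_comp, Function.comp_apply] at this
      rw [sub_eq_zero] at this
      exact this
    funext b
    by_cases hb : b = a
    · rw [hb]
      show extMap a _ _ a = x a
      rw [extMap_self]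
      exact hxa.symm
    · show extMap a _ _ b = x b
      rw [show b = (⟨b, hb⟩ : {b : A // b ≠ a}).1 from rfl, extMap_ne]
      rfl
  · -- image
    ext y
    constructor
    · rintro ⟨x, hxP, rfl⟩
      constructor
      · intro b; exact hxP.1 b.1
      · intro u
        rw [flow_contract s t a h (φ x) u]
        have hcast : ((if u.1 = t a then (0:ℤ) + 0 else 0 : ℤ) : ℝ) = 0 := by
          split <;> simp
        rw [show ((fun v : {v : V // v ≠ s a} =>
            if v.1 = t a then (0:ℤ) + 0 else 0) u : ℤ) = if u.1 = t a then (0:ℤ) + 0 else 0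
            from rfl, hcast]
        by_cases hu : u.1 = t a
        · rw [if_pos hu, hE x hxP (s a), hE x hxP (t a),
            if_pos rfl, if_neg (fun e => h e.symm), if_neg h, if_pos rfl]
          ring
        · rw [if_neg hu, hE x hxP u.1, if_neg (fun e => u.2 e.symm), if_neg (fun e => hu e.symm)]
          ring
    · rintro ⟨hy0, hyf⟩
      have hCt : flowMap (fun b : {b : A // b ≠ a} => s b.1) (fun b => t b.1) y (s a)
          + flowMap (fun b : {b : A // b ≠ a} => s b.1) (fun b => t b.1) y (t a) = 0 := by
        have := hyf ⟨t a, Ne.symm h⟩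
        rw [flow_contract s t a h y ⟨t a, Ne.symm h⟩, if_pos rfl] at this
        simpa using this
      have hCw : ∀ (w : V) (hw : w ≠ s a), w ≠ t a →
          flowMap (fun b : {b : A // b ≠ a} => s b.1) (fun b => t b.1) y w = 0 := by
        intro w hw hw2
        have := hyf ⟨w, hw⟩
        rw [flow_contract s t a h y ⟨w, hw⟩, if_neg hw2] at this
        simpa using this
      have hxb : ∀ b : {b : A // b ≠ a}, (ψ y : A → ℝ) b.1 = y b := fun b => extMap_ne a _ y b
      have hxa : (ψ y : A → ℝ) a = linSum p y := extMap_self a _ y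
      have hzero : linSum (fun b : {b : A // b ≠ a} => s b.1 = s a) y = 0 :=
        linSum_zero_of _ _ (fun b hb => b.2 (huniq b.1 hb))
      have hflowsa : flowMap (fun b : {b : A // b ≠ a} => s b.1) (fun b => t b.1) y (s a)
          = linSum p y := by
        rw [flowDel_eq s t a y (s a), hzero]
        ring
      refine ⟨ψ y, ⟨?_, ?_⟩, ?_⟩
      · intro b
        by_cases hb : b = a
        · rw [hb, hxa]; exact linSum_nonneg _ _ hy0
        · rw [show b = (⟨b, hb⟩ : {b : A // b ≠ a}).1 from rfl, hxb]
          exact hy0 _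
      · intro w
        have h1 := flow_ext s t a y (ψ y) hxb w
        push_cast
        rw [h1, hxa]
        by_cases hw1 : w = s a
        · subst hw1
          rw [if_neg (fun e => h e.symm), if_pos rfl, hflowsa]
          ring
        · by_cases hw2 : w = t a
          · subst hw2
            rw [if_pos rfl, if_neg h]
            linarith [hCt, hflowsa]
          · rw [if_neg (fun e => hw2 e.symm), if_neg (fun e => hw1 e.symm),
              hCw w hw1 hw2]
            ring
      · funext b
        exact hxb b
  · intro x hx b; exact hx b.1
  · intro y hy
    exact extMap_lattice a p y hy

end Contract2

section Contract3

variable {V A : Type} [Fintype A] [DecidableEq V] [DecidableEq A]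

lemma contractable_in (s t : A → V) (a : A) (h : s a ≠ t a)
    (huniq : ∀ b, t b = t a → b = a) :
    Contractable s t (fun _ => (0:ℤ)) a h := by
  classical
  set p : {b : A // b ≠ a} → Prop := fun b => s b.1 = t a with hp
  set φ : (A → ℝ) →ᵃ[ℝ] ({b : A // b ≠ a} → ℝ) :=
    (LinearMap.funLeft ℝ ℝ (Subtype.val : {b : A // b ≠ a} → A)).toAffineMap with hφdef
  set ψ := (extMap a (linSum p)).toAffineMap with hψdef
  have hφx : ∀ (x : A → ℝ) (b : {b : A // b ≠ a}), φ x b = x b.1 := fun _ _ => rfl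
  have hE : ∀ x ∈ quiverPolyhedron s t (fun _ => (0:ℤ)), ∀ w,
      flowMap (fun b : {b : A // b ≠ a} => s b.1) (fun b => t b.1) (φ x) w
        = (if s a = w then x a else 0) - (if t a = w then x a else 0) := by
    intro x hx w
    have h1 := flow_ext s t a (φ x) x (fun _ => rfl) w
    have h2 := hx.2 w
    rw [h2] at h1
    push_cast at h1
    linarith
  have hkey : ∀ x ∈ quiverPolyhedron s t (fun _ => (0:ℤ)), x a = linSum p (φ x) := by
    intro x hx
    have hE1 := hE x hx (t a)
    rw [if_neg h, if_pos rfl, flowDel_eq] at hE1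
    have hz : linSum (fun b : {b : A // b ≠ a} => t b.1 = t a) (φ x) = 0 :=
      linSum_zero_of _ _ (fun b hb => b.2 (huniq b.1 hb))
    rw [hz] at hE1
    linarith
  refine equiv_of_pair _ _ φ ψ ?_ ?_ ?_ ?_
  · intro x hx
    have hx' : x ∈ Submodule.span ℝ (quiverPolyhedron s t (fun _ => (0:ℤ))) := by
      have := affineSpan_le_toAffineSubspace_span
        (k := ℝ) (s := quiverPolyhedron s t (fun _ => (0:ℤ))) hx
      simpa [Submodule.mem_toAffineSubspace] using this
    set f : (A → ℝ) →ₗ[ℝ] ℝ :=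
      LinearMap.proj a - (linSum p).comp (LinearMap.funLeft ℝ ℝ Subtype.val) with hfdef
    have hker : Submodule.span ℝ (quiverPolyhedron s t (fun _ => (0:ℤ)))
        ≤ LinearMap.ker f := by
      rw [Submodule.span_le]
      intro z hz
      have := hkey z hz
      simp only [SetLike.mem_coe, LinearMap.mem_ker, hfdef, LinearMap.sub_apply,
        LinearMap.proj_apply, LinearMap.coe_comp, Function.comp_apply]
      rw [sub_eq_zero]
      exact this
    have hxa : x a = linSum p (φ x) := by
      have := hker hx'
      simp only [LinearMap.mem_ker, hfdef, LinearMap.sub_apply, LinearMap.proj_apply,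
        LinearMap.coe_comp, Function.comp_apply] at this
      rw [sub_eq_zero] at this
      exact this
    funext b
    by_cases hb : b = a
    · rw [hb]
      show extMap a _ _ a = x a
      rw [extMap_self]
      exact hxa.symm
    · show extMap a _ _ b = x b
      rw [show b = (⟨b, hb⟩ : {b : A // b ≠ a}).1 from rfl, extMap_ne]
      rfl
  · ext y
    constructor
    · rintro ⟨x, hxP, rfl⟩
      constructor
      · intro b; exact hxP.1 b.1
      · intro u
        rw [flow_contract s t a h (φ x) u]
        have hcast : ((if u.1 = t a then (0:ℤ) + 0 else 0 : ℤ) : ℝ) = 0 := by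
          split <;> simp
        rw [show ((fun v : {v : V // v ≠ s a} =>
            if v.1 = t a then (0:ℤ) + 0 else 0) u : ℤ) = if u.1 = t a then (0:ℤ) + 0 else 0
            from rfl, hcast]
        by_cases hu : u.1 = t a
        · rw [if_pos hu, hE x hxP (s a), hE x hxP (t a),
            if_pos rfl, if_neg (fun e => h e.symm), if_neg h, if_pos rfl]
          ring
        · rw [if_neg hu, hE x hxP u.1, if_neg (fun e => u.2 e.symm), if_neg (fun e => hu e.symm)]
          ring
    · rintro ⟨hy0, hyf⟩
      have hCt : flowMap (fun b : {b : A // b ≠ a} => s b.1) (fun b => t b.1) y (s a)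
          + flowMap (fun b : {b : A // b ≠ a} => s b.1) (fun b => t b.1) y (t a) = 0 := by
        have := hyf ⟨t a, Ne.symm h⟩
        rw [flow_contract s t a h y ⟨t a, Ne.symm h⟩, if_pos rfl] at this
        simpa using this
      have hCw : ∀ (w : V) (hw : w ≠ s a), w ≠ t a →
          flowMap (fun b : {b : A // b ≠ a} => s b.1) (fun b => t b.1) y w = 0 := by
        intro w hw hw2
        have := hyf ⟨w, hw⟩
        rw [flow_contract s t a h y ⟨w, hw⟩, if_neg hw2] at this
        simpa using this
      have hxb : ∀ b : {b : A // b ≠ a}, (ψ y : A → ℝ) b.1 = y b := fun b => extMap_ne a _ y b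
      have hxa : (ψ y : A → ℝ) a = linSum p y := extMap_self a _ y
      have hzero : linSum (fun b : {b : A // b ≠ a} => t b.1 = t a) y = 0 :=
        linSum_zero_of _ _ (fun b hb => b.2 (huniq b.1 hb))
      have hflowta : flowMap (fun b : {b : A // b ≠ a} => s b.1) (fun b => t b.1) y (t a)
          = -(linSum p y) := by
        rw [flowDel_eq s t a y (t a), hzero]
        ring
      refine ⟨ψ y, ⟨?_, ?_⟩, ?_⟩
      · intro b
        by_cases hb : b = a
        · rw [hb, hxa]; exact linSum_nonneg _ _ hy0
        · rw [show b = (⟨b, hb⟩ : {b : A // b ≠ a}).1 from rfl, hxb]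
          exact hy0 _
      · intro w
        have h1 := flow_ext s t a y (ψ y) hxb w
        push_cast
        rw [h1, hxa]
        by_cases hw1 : w = s a
        · subst hw1
          rw [if_neg (fun e => h e.symm), if_pos rfl]
          linarith [hCt, hflowta]
        · by_cases hw2 : w = t a
          · subst hw2
            rw [if_pos rfl, if_neg h]
            linarith [hflowta]
          · rw [if_neg (fun e => hw2 e.symm), if_neg (fun e => hw1 e.symm),
              hCw w hw1 hw2]
            ring
      · funext b
        exact hxb b
  · intro x hx b; exact hx b.1
  · intro y hy
    exact extMap_lattice a p y hy

end Contract3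

section Main

variable {V A : Type} [Fintype A] [DecidableEq V] [DecidableEq A]

lemma vanish_in_of_no_out (s t : A → V) (v : V) (hout : ∀ b, s b ≠ v) :
    ∀ x ∈ quiverPolyhedron s t (fun _ => (0:ℤ)), ∀ b, t b = v → x b = 0 := by
  intro x hx b hb
  have hf := hx.2 v
  unfold flowMap at hf
  push_cast at hf
  have hso : (∑ c : A, if s c = v then x c else 0) = 0 :=
    Finset.sum_eq_zero fun c _ => if_neg (hout c)
  rw [hso, sub_zero] at hf
  have h0 := (Finset.sum_eq_zero_iff_of_nonneg
    (fun c _ => by split; exacts [hx.1 c, le_rfl])).mp hf b (Finset.mem_univ b)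
  rwa [if_pos hb] at h0

lemma vanish_in_of_loop (s t : A → V) (v : V) (a : A) (ha : s a = v) (hloop : t a = v)
    (huniq : ∀ b, s b = v → b = a) :
    ∀ x ∈ quiverPolyhedron s t (fun _ => (0:ℤ)), ∀ b, b ≠ a → t b = v → x b = 0 := by
  intro x hx b hb htb
  have hf := hx.2 v
  unfold flowMap at hf
  push_cast at hf
  have hso : (∑ c : A, if s c = v then x c else 0) = x a := by
    rw [Finset.sum_eq_single a]
    · rw [if_pos ha]
    · intro c _ hc; exact if_neg (fun e => hc (huniq c e))
    · intro hc; exact absurd (Finset.mem_univ a) hc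
  have hsi : (∑ c : A, if t c = v then x c else 0)
      = x a + ∑ c : {c : A // c ≠ a}, (if t c.1 = v then x c.1 else 0) := by
    rw [sum_split a (fun c => if t c = v then x c else 0), if_pos hloop]
  rw [hso, hsi] at hf
  have hsum0 : ∑ c : {c : A // c ≠ a}, (if t c.1 = v then x c.1 else 0) = 0 := by linarith
  have h0 := (Finset.sum_eq_zero_iff_of_nonneg
    (fun c _ => by split; exacts [hx.1 c.1, le_rfl])).mp hsum0 ⟨b, hb⟩ (Finset.mem_univ _)
  rwa [if_pos htb] at h0

lemma vanish_out_of_no_in (s t : A → V) (v : V) (hin : ∀ b, t b ≠ v) :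
    ∀ x ∈ quiverPolyhedron s t (fun _ => (0:ℤ)), ∀ b, s b = v → x b = 0 := by
  intro x hx b hb
  have hf := hx.2 v
  unfold flowMap at hf
  push_cast at hf
  have hsi : (∑ c : A, if t c = v then x c else 0) = 0 :=
    Finset.sum_eq_zero fun c _ => if_neg (hin c)
  rw [hsi] at hf
  have hf' : (∑ c : A, if s c = v then x c else 0) = 0 := by linarith
  have h0 := (Finset.sum_eq_zero_iff_of_nonneg
    (fun c _ => by split; exacts [hx.1 c, le_rfl])).mp hf' b (Finset.mem_univ b)
  rwa [if_pos hb] at h0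

lemma vanish_out_of_loop (s t : A → V) (v : V) (a : A) (ha : t a = v) (hloop : s a = v)
    (huniq : ∀ b, t b = v → b = a) :
    ∀ x ∈ quiverPolyhedron s t (fun _ => (0:ℤ)), ∀ b, b ≠ a → s b = v → x b = 0 := by
  intro x hx b hb hsb
  have hf := hx.2 v
  unfold flowMap at hf
  push_cast at hf
  have hsi : (∑ c : A, if t c = v then x c else 0) = x a := by
    rw [Finset.sum_eq_single a]
    · rw [if_pos ha]
    · intro c _ hc; exact if_neg (fun e => hc (huniq c e))
    · intro hc; exact absurd (Finset.mem_univ a) hc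
  have hso : (∑ c : A, if s c = v then x c else 0)
      = x a + ∑ c : {c : A // c ≠ a}, (if s c.1 = v then x c.1 else 0) := by
    rw [sum_split a (fun c => if s c = v then x c else 0), if_pos hloop]
  rw [hso, hsi] at hf
  have hsum0 : ∑ c : {c : A // c ≠ a}, (if s c.1 = v then x c.1 else 0) = 0 := by linarith
  have h0 := (Finset.sum_eq_zero_iff_of_nonneg
    (fun c _ => by split; exacts [hx.1 c.1, le_rfl])).mp hsum0 ⟨b, hb⟩ (Finset.mem_univ _)
  rwa [if_pos hsb] at h0

lemma neighbor_arrow (s t : A → V)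
    (hconn : (mgraphAdj (quiverEnds s t)).Connected) (v w : V) (hvw : v ≠ w) :
    ∃ (e : A) (u : V), u ≠ v ∧ ((s e = v ∧ t e = u) ∨ (s e = u ∧ t e = v)) := by
  obtain ⟨p⟩ := hconn.preconnected v w
  cases p with
  | nil => exact absurd rfl hvw
  | @cons _ u _ hadj q =>
    obtain ⟨hne, hr⟩ := (SimpleGraph.fromRel_adj _ v u).mp hadj
    rcases hr with ⟨e, he⟩ | ⟨e, he⟩
    · unfold quiverEnds at he
      rw [Sym2.eq_iff] at he
      rcases he with ⟨h1, h2⟩ | ⟨h1, h2⟩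
      · exact ⟨e, u, hne.symm, Or.inl ⟨h1, h2⟩⟩
      · exact ⟨e, u, hne.symm, Or.inr ⟨h1, h2⟩⟩
    · unfold quiverEnds at he
      rw [Sym2.eq_iff] at he
      rcases he with ⟨h1, h2⟩ | ⟨h1, h2⟩
      · exact ⟨e, u, hne.symm, Or.inr ⟨h1, h2⟩⟩
      · exact ⟨e, u, hne.symm, Or.inl ⟨h1, h2⟩⟩

lemma singleton_contra [Fintype V] (s t : A → V) (d : ℕ) (hd : 2 ≤ d)
    (hchi : Fintype.card A + Nat.card (mgraphAdj (quiverEnds s t)).ConnectedComponent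
      = Fintype.card V + d)
    (a : A) (hall : ∀ b : A, b = a) (hsing : ∀ w w' : V, w = w') : False := by
  have hA : Fintype.card A = 1 := Fintype.card_eq_one_iff.mpr ⟨a, hall⟩
  have hV : Fintype.card V = 1 := Fintype.card_eq_one_iff.mpr ⟨s a, fun w => hsing w (s a)⟩
  have hsurj : Function.Surjective
      ((mgraphAdj (quiverEnds s t)).connectedComponentMk) := fun c => c.exists_rep
  have hle : Nat.card (mgraphAdj (quiverEnds s t)).ConnectedComponent ≤ Nat.card V :=
    Nat.card_le_card_of_surjective _ hsurj
  simp only [Nat.card_eq_fintype_card] at hle hchi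
  omega

end Main

/-- in a prime quiver with `χ(Q) ≥ 2` which is tight for the zero
weight, each vertex has at least two outgoing and at least two incoming arrows. -/
theorem stmt10 {V A : Type} [Fintype V] [Fintype A] [DecidableEq V] [DecidableEq A]
    (s t : A → V) (hprime : QuiverPrime s t) (d : ℕ) (hd : 2 ≤ d)
    (hchi : Fintype.card A + Nat.card (mgraphAdj (quiverEnds s t)).ConnectedComponent
      = Fintype.card V + d)
    (htight : Tight s t (fun _ => 0)) :
    ∀ v : V, 2 ≤ (Finset.univ.filter (fun a : A => s a = v)).card ∧
             2 ≤ (Finset.univ.filter (fun a : A => t a = v)).card := by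
  classical
  obtain ⟨hconn, hNE, -⟩ := hprime
  intro v
  constructor
  · -- out-degree ≥ 2
    by_contra hlt
    push_neg at hlt
    interval_cases hc : (Finset.univ.filter (fun a : A => s a = v)).card
    · -- no outgoing arrow
      have hout : ∀ b, s b ≠ v := by
        intro b hb
        have : b ∈ Finset.univ.filter (fun a : A => s a = v) := by
          simp [hb]
        rw [Finset.card_eq_zero.mp hc] at this
        exact absurd this (Finset.notMem_empty b)
      by_cases hin : ∃ a, t a = v
      · obtain ⟨a, ha⟩ := hin
        exact htight.2.1 a (removable_of_vanishing s t a
          (fun x hx => vanish_in_of_no_out s t v hout x hx a ha))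
      · push_neg at hin
        obtain ⟨e⟩ := hNE
        obtain ⟨e', u, -, he'⟩ := neighbor_arrow s t hconn v (s e) (fun hv => hout e hv.symm)
        rcases he' with ⟨h1, -⟩ | ⟨-, h2⟩
        · exact hout e' h1
        · exact hin e' h2
    · -- exactly one outgoing arrow
      obtain ⟨a, hfa⟩ := Finset.card_eq_one.mp hc
      have haf : a ∈ Finset.univ.filter (fun a : A => s a = v) := by
        rw [hfa]; exact Finset.mem_singleton_self a
      have ha : s a = v := (Finset.mem_filter.mp haf).2
      have huniq : ∀ b, s b = v → b = a := by
        intro b hb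
        have : b ∈ Finset.univ.filter (fun a : A => s a = v) := by simp [hb]
        rw [hfa] at this
        exact Finset.mem_singleton.mp this
      by_cases hloop : t a = v
      · by_cases hother : ∃ b, b ≠ a ∧ t b = v
        · obtain ⟨b, hb, htb⟩ := hother
          exact htight.2.1 b (removable_of_vanishing s t b
            (fun x hx => vanish_in_of_loop s t v a ha hloop huniq x hx b hb htb))
        · push_neg at hother
          by_cases hsing : ∀ w : V, w = v
          · refine singleton_contra s t d hd hchi a ?_ (fun w w' => (hsing w).trans (hsing w').symm)
            intro b
            exact huniq b (hsing (s b))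
          · push_neg at hsing
            obtain ⟨w, hw⟩ := hsing
            obtain ⟨e', u, hu, he'⟩ := neighbor_arrow s t hconn v w (fun hv => hw hv.symm)
            rcases he' with ⟨h1, h2⟩ | ⟨h1, h2⟩
            · have : e' = a := huniq e' h1
              rw [this, hloop] at h2
              exact hu h2.symm
            · by_cases he : e' = a
              · rw [he, ha] at h1
                exact hu h1.symm
              · exact hother e' he h2
      · have h' : s a ≠ t a := fun e => hloop (e.symm.trans ha)
        exact htight.2.2 a h' (contractable_out s t a h' (fun b hb => huniq b (hb.trans ha)))
  · -- in-degree ≥ 2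
    by_contra hlt
    push_neg at hlt
    interval_cases hc : (Finset.univ.filter (fun a : A => t a = v)).card
    · have hin : ∀ b, t b ≠ v := by
        intro b hb
        have : b ∈ Finset.univ.filter (fun a : A => t a = v) := by simp [hb]
        rw [Finset.card_eq_zero.mp hc] at this
        exact absurd this (Finset.notMem_empty b)
      by_cases hout : ∃ a, s a = v
      · obtain ⟨a, ha⟩ := hout
        exact htight.2.1 a (removable_of_vanishing s t a
          (fun x hx => vanish_out_of_no_in s t v hin x hx a ha))
      · push_neg at hout
        obtain ⟨e⟩ := hNE
        obtain ⟨e', u, -, he'⟩ := neighbor_arrow s t hconn v (s e) (fun hv => hout e hv.symm)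
        rcases he' with ⟨h1, -⟩ | ⟨-, h2⟩
        · exact hout e' h1
        · exact hin e' h2
    · obtain ⟨a, hfa⟩ := Finset.card_eq_one.mp hc
      have haf : a ∈ Finset.univ.filter (fun a : A => t a = v) := by
        rw [hfa]; exact Finset.mem_singleton_self a
      have ha : t a = v := (Finset.mem_filter.mp haf).2
      have huniq : ∀ b, t b = v → b = a := by
        intro b hb
        have : b ∈ Finset.univ.filter (fun a : A => t a = v) := by simp [hb]
        rw [hfa] at this
        exact Finset.mem_singleton.mp this
      by_cases hloop : s a = v
      · by_cases hother : ∃ b, b ≠ a ∧ s b = v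
        · obtain ⟨b, hb, hsb⟩ := hother
          exact htight.2.1 b (removable_of_vanishing s t b
            (fun x hx => vanish_out_of_loop s t v a ha hloop huniq x hx b hb hsb))
        · push_neg at hother
          by_cases hsing : ∀ w : V, w = v
          · refine singleton_contra s t d hd hchi a ?_ (fun w w' => (hsing w).trans (hsing w').symm)
            intro b
            exact huniq b (hsing (t b))
          · push_neg at hsing
            obtain ⟨w, hw⟩ := hsing
            obtain ⟨e', u, hu, he'⟩ := neighbor_arrow s t hconn v w (fun hv => hw hv.symm)
            rcases he' with ⟨h1, h2⟩ | ⟨h1, h2⟩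
            · by_cases he : e' = a
              · rw [he, ha] at h2
                exact hu h2.symm
              · exact hother e' he h1
            · have : e' = a := huniq e' h2
              rw [this, hloop] at h1
              exact hu h1.symm
      · have h' : s a ≠ t a := fun e => hloop (e.trans ha)
        exact htight.2.2 a h' (contractable_in s t a h' (fun b hb => huniq b (hb.trans ha)))
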